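/- arXiv:2011.04630 — 5 statements merged into one kernel-verified Lean document; each statement's English description precedes it below -/
import Mathlib

section
/- For every t > 0, the integral over ℝ² of log(1/‖y‖)·(1/(4πt))·exp(−‖y‖²/(4t)) dy equals γ/2 − log(4t)/2, where γ is the Euler–Mascheroni constant. -/
/-!
In polar coordinates the integral becomes `(2π / 4πt) ∫₀^∞ r log(1/r) e^{-r²/4t} dr`, and the
substitution `r² = 4t u` turns this into `-(1/2) ∫₀^∞ (log(4t) + log u) e^{-u} du`. The remaining
integral `∫₀^∞ log u e^{-u} du` is `Γ'(1) = -γ`.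
-/

open MeasureTheory Real Set

theorem integral_log_mul_exp_neg :
    ∫ x in Ioi (0 : ℝ), log x * exp (-x) = -eulerMascheroniConstant := by
  have hGammaIntegral := Complex.hasDerivAt_GammaIntegral (s := 1) (by norm_num)
  have hGamma : HasDerivAt Complex.Gamma
      (∫ x in Ioi (0 : ℝ), ((log x * exp (-x) : ℝ) : ℂ)) 1 := by
    refine (hGammaIntegral.congr_of_eventuallyEq ?_).congr_deriv ?_
    · filter_upwards [(isOpen_lt continuous_const Complex.continuous_re).mem_nhds
        (by norm_num : (0 : ℝ) < (1 : ℂ).re)] with s hs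
      exact Complex.Gamma_eq_integral hs
    · refine setIntegral_congr_fun measurableSet_Ioi fun x _ => ?_
      simp
  rw [integral_complex_ofReal] at hGamma
  exact_mod_cast hGamma.unique Complex.hasDerivAt_Gamma_one

theorem integrableOn_log_mul_exp_neg :
    IntegrableOn (fun x => log x * exp (-x)) (Ioi (0 : ℝ)) :=
  -- a non-integrable function would have integral `0`, but `γ > 0`
  Integrable.of_integral_ne_zero <| by
    rw [integral_log_mul_exp_neg, neg_ne_zero]
    exact (one_half_pos.trans one_half_lt_eulerMascheroniConstant).ne'

theorem integral_log_mul_exp_neg_div {a : ℝ} (ha : 0 < a) :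
    ∫ x in Ioi (0 : ℝ), log x * exp (-x / a) = a * (log a - eulerMascheroniConstant) := by
  have hsplit : ∀ u ∈ Ioi (0 : ℝ), log (a * u) * exp (-(a * u) / a)
      = log a * exp (-u) + log u * exp (-u) := fun u hu => by
    rw [log_mul ha.ne' (ne_of_gt hu), neg_div, mul_div_cancel_left₀ _ ha.ne']
    ring
  calc ∫ x in Ioi (0 : ℝ), log x * exp (-x / a)
      = a * ∫ u in Ioi (0 : ℝ), log (a * u) * exp (-(a * u) / a) := by
        simpa using (integral_comp_mul_left_Ioi' (fun x => log x * exp (-x / a)) 0 ha).symm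
    _ = a * ∫ u in Ioi (0 : ℝ), (log a * exp (-u) + log u * exp (-u)) := by
        rw [setIntegral_congr_fun measurableSet_Ioi hsplit]
    _ = a * (log a - eulerMascheroniConstant) := by
        rw [integral_add ((integrableOn_exp_neg_Ioi 0).const_mul _)
          integrableOn_log_mul_exp_neg, integral_const_mul, integral_exp_neg_Ioi_zero,
          integral_log_mul_exp_neg, mul_one, sub_eq_add_neg]

theorem integral_mul_log_mul_exp_neg_sq_div {a : ℝ} (ha : 0 < a) :
    ∫ r in Ioi (0 : ℝ), r * (log r * exp (-r ^ 2 / a))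
      = a / 4 * (log a - eulerMascheroniConstant) := by
  have hsq : ∀ r ∈ Ioi (0 : ℝ), r * (log r * exp (-r ^ 2 / a))
      = (|2| * r ^ ((2 : ℝ) - 1)) • ((1 / 4) * (log (r ^ (2 : ℝ)) * exp (-r ^ (2 : ℝ) / a))) :=
    fun r hr => by
      rw [rpow_two, log_pow, smul_eq_mul, abs_two, show (2 : ℝ) - 1 = 1 by norm_num, rpow_one]
      push_cast
      ring
  rw [setIntegral_congr_fun measurableSet_Ioi hsq,
    integral_comp_rpow_Ioi (fun v => 1 / 4 * (log v * exp (-v / a))) two_ne_zero,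
    integral_const_mul, integral_log_mul_exp_neg_div ha]
  ring

theorem integral_euclideanSpace_fin_two_fun_norm {F : Type*} [NormedAddCommGroup F]
    [NormedSpace ℝ F] (f : ℝ → F) :
    ∫ y : EuclideanSpace ℝ (Fin 2), f ‖y‖ = (2 * π) • ∫ r in Ioi (0 : ℝ), r • f r := by
  rw [integral_fun_norm_addHaar, finrank_euclideanSpace_fin, measureReal_def,
    EuclideanSpace.volume_ball_fin_two]
  simp only [ENNReal.ofReal_one, one_pow, one_mul, ENNReal.toReal_ofReal pi_nonneg,
    Nat.add_one_sub_one, pow_one]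
  rw [two_smul, two_mul, add_smul]

theorem heat_kernel_log_integral (t : ℝ) (ht : 0 < t) :
    ∫ y : EuclideanSpace ℝ (Fin 2),
        Real.log (1 / ‖y‖) * ((1 / (4 * π * t)) * Real.exp (-‖y‖ ^ 2 / (4 * t)))
      = Real.eulerMascheroniConstant / 2 - Real.log (4 * t) / 2 := by
  have hradial : ∀ r : ℝ, r • (log (1 / r) * ((1 / (4 * π * t)) * exp (-r ^ 2 / (4 * t))))
      = -(1 / (4 * π * t)) * (r * (log r * exp (-r ^ 2 / (4 * t)))) := fun r => by
    rw [smul_eq_mul, one_div, log_inv]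
    ring
  rw [integral_euclideanSpace_fin_two_fun_norm
      (fun r => log (1 / r) * ((1 / (4 * π * t)) * exp (-r ^ 2 / (4 * t)))),
    funext hradial, integral_const_mul, integral_mul_log_mul_exp_neg_sq_div (by positivity),
    smul_eq_mul]
  field_simp
  ring
end

section
/- For every t > 0, the improper integral ∫₀^∞ log(1/r)·exp(−r²/(4t))·r dr equals t·(γ − log(4t)), where γ is the Euler–Mascheroni constant. -/
/-!
Substituting `y = r²` and then `y = 4t u` turns the integral into
`-t ∫₀^∞ log (4t u) e^{-u} du`. Splitting the logarithm leaves `log (4t) ∫₀^∞ e^{-u} du = log (4t)`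
and `∫₀^∞ log u e^{-u} du = Γ'(1) = -γ`, the latter by differentiating the Gamma integral under
the integral sign.
-/

open MeasureTheory Real Set

theorem integral_smul_comp_sq_Ioi {E : Type*} [NormedAddCommGroup E] [NormedSpace ℝ E]
    (f : ℝ → E) :
    ∫ r in Ioi (0 : ℝ), r • f (r ^ 2) = (2 : ℝ)⁻¹ • ∫ y in Ioi (0 : ℝ), f y := by
  rw [← integral_comp_rpow_Ioi_of_pos (g := f) two_pos, ← integral_smul]
  refine setIntegral_congr_fun measurableSet_Ioi fun r _ => ?_
  rw [smul_smul, rpow_two, show (2 : ℝ) - 1 = 1 by norm_num, rpow_one,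
    inv_mul_cancel_left₀ two_ne_zero]

theorem integral_log_mul_exp_neg_Ioi :
    ∫ u in Ioi (0 : ℝ), log u * exp (-u) = -eulerMascheroniConstant := by
  have hGamma : HasDerivAt Complex.GammaIntegral (-eulerMascheroniConstant : ℂ) 1 := by
    refine Complex.hasDerivAt_Gamma_one.congr_of_eventuallyEq ?_
    have hre : IsOpen {s : ℂ | 0 < s.re} := isOpen_lt continuous_const Complex.continuous_re
    filter_upwards [hre.mem_nhds (by norm_num : (0 : ℝ) < (1 : ℂ).re)] with s hs
    exact (Complex.Gamma_eq_integral hs).symm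
  have h := hGamma.unique (Complex.hasDerivAt_GammaIntegral (by norm_num))
  simp only [sub_self, Complex.cpow_zero, one_mul, ← Complex.ofReal_mul] at h
  exact_mod_cast h.symm

theorem integrableOn_log_mul_exp_neg_Ioi :
    IntegrableOn (fun u : ℝ => log u * exp (-u)) (Ioi 0) :=
  -- a non-integrable function has Bochner integral `0`, while this one integrates to `-γ ≠ 0`
  Integrable.of_integral_ne_zero <| by
    rw [integral_log_mul_exp_neg_Ioi]
    linarith [one_half_lt_eulerMascheroniConstant]

theorem integral_log_const_mul_mul_exp_neg_Ioi {c : ℝ} (hc : 0 < c) :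
    ∫ u in Ioi (0 : ℝ), log (c * u) * exp (-u) = log c - eulerMascheroniConstant := by
  have hsplit : ∀ u ∈ Ioi (0 : ℝ),
      log (c * u) * exp (-u) = log c * exp (-u) + log u * exp (-u) := fun u hu => by
    rw [log_mul hc.ne' (ne_of_gt hu), add_mul]
  have hexp : IntegrableOn (fun u : ℝ => exp (-u)) (Ioi 0) := by
    simpa using exp_neg_integrableOn_Ioi 0 one_pos
  rw [setIntegral_congr_fun measurableSet_Ioi hsplit,
    integral_add (hexp.const_mul _) integrableOn_log_mul_exp_neg_Ioi, integral_const_mul,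
    integral_exp_neg_Ioi_zero, integral_log_mul_exp_neg_Ioi]
  ring

theorem radial_log_gaussian_integral (t : ℝ) (ht : 0 < t) :
    ∫ r in Set.Ioi (0 : ℝ), Real.log (1 / r) * Real.exp (-r ^ 2 / (4 * t)) * r
      = t * (Real.eulerMascheroniConstant - Real.log (4 * t)) := by
  have h4t : 0 < 4 * t := by positivity
  set F : ℝ → ℝ := fun y => -(1 / 2) * log y * exp (-y / (4 * t))
  have hradial :
      (fun r : ℝ => log (1 / r) * exp (-r ^ 2 / (4 * t)) * r) = fun r => r • F (r ^ 2) := by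
    ext r
    simp only [F, smul_eq_mul, one_div, log_inv, log_pow]
    ring
  have hscale : ∫ y in Ioi (0 : ℝ), F y =
      -(2 * t) * ∫ u in Ioi (0 : ℝ), log (4 * t * u) * exp (-u) := by
    have hsubst := integral_comp_mul_left_Ioi' F 0 h4t
    rw [mul_zero] at hsubst
    rw [← hsubst, smul_eq_mul, ← integral_const_mul, ← integral_const_mul]
    refine setIntegral_congr_fun measurableSet_Ioi fun u _ => ?_
    simp only [F]
    rw [neg_div, mul_div_cancel_left₀ _ h4t.ne']
    ring
  rw [hradial, integral_smul_comp_sq_Ioi, hscale, integral_log_const_mul_mul_exp_neg_Ioi h4t,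
    smul_eq_mul]
  ring
end

section
/- For every c > 0, ∫₀^c (1/(2s))·( L(exp(−2π/(√3·s))) − 1 ) ds = (1/2)·∑_{(k₁,k₂) ∈ ℤ², (k₁,k₂) ≠ (0,0)} Γ(0, (2π/(√3·c))·(k₁² + k₁k₂ + k₂²)), where L(q) = ∑_{m,n ∈ ℤ} q^{m²+mn+n²} and Γ(0,z) = ∫_z^∞ e^{−t}/t dt is the incomplete gamma function. -/
open MeasureTheory Real

/-- The cubic analogue of the Jacobi theta function:
`L(q) = ∑_{m,n ∈ ℤ} q^(m² + mn + n²)`. -/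
noncomputable def cubicTheta (q : ℝ) : ℝ :=
  ∑' p : ℤ × ℤ, q ^ (p.1 ^ 2 + p.1 * p.2 + p.2 ^ 2)

/-- The incomplete gamma function `Γ(0, z) = ∫_z^∞ e^{-t}/t dt` for `z > 0`. -/
noncomputable def incGamma (z : ℝ) : ℝ := ∫ t in Set.Ioi z, Real.exp (-t) / t

/-! With `a = 2π/√3` and `Q(m, n) = m² + mn + n²`, the integrand is
`∑_{p ≠ 0} e^{-a Q(p)/s} / (2s)`. For each term the substitution `t = a Q(p)/s` maps `(0, c)`
onto `(a Q(p)/c, ∞)` and turns its integral into `Γ(0, a Q(p)/c) / 2`. The terms are nonnegative,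
so summation and integration may be swapped once the `Γ(0, a Q(p)/c)` are summable; this follows
from `Γ(0, z) ≤ e^{-z}/z` and `|m| + |n| ≤ 2 Q(m, n)`, which dominates the sum by a product of
two geometric series. -/

open Set

def cubicForm (p : ℤ × ℤ) : ℤ := p.1 ^ 2 + p.1 * p.2 + p.2 ^ 2

lemma natAbs_add_natAbs_le_two_mul_cubicForm (p : ℤ × ℤ) :
    (p.1.natAbs : ℤ) + p.2.natAbs ≤ 2 * cubicForm p := by
  unfold cubicForm
  nlinarith [Int.natAbs_le_self_sq p.1, Int.natAbs_le_self_sq p.2, sq_nonneg (p.1 + p.2)]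

lemma one_le_cubicForm {p : ℤ × ℤ} (hp : p ≠ 0) : 1 ≤ cubicForm p := by
  have h := natAbs_add_natAbs_le_two_mul_cubicForm p
  rw [Ne, Prod.ext_iff] at hp
  simp only [Prod.fst_zero, Prod.snd_zero] at hp
  omega

lemma summable_exp_neg_mul_cubicForm {d : ℝ} (hd : 0 < d) :
    Summable fun p : ℤ × ℤ => exp (-(d * cubicForm p)) := by
  have hgeo : Summable fun n : ℕ => exp (-(d / 2)) ^ n :=
    summable_geometric_of_lt_one (exp_pos _).le (exp_lt_one_iff.2 (by linarith))
  have hgeoℤ : Summable fun n : ℤ => exp (-(d / 2)) ^ n.natAbs :=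
    .of_nat_of_neg (by simpa using hgeo) (by simpa using hgeo)
  refine .of_nonneg_of_le (fun p => (exp_pos _).le) (fun p => ?_)
    (hgeoℤ.mul_of_nonneg hgeoℤ (fun _ => by positivity) (fun _ => by positivity))
  have h := Int.cast_le (R := ℝ) |>.2 (natAbs_add_natAbs_le_two_mul_cubicForm p)
  push_cast at h
  rw [← pow_add, ← exp_nat_mul, exp_le_exp]
  simp only [Nat.cast_add, Nat.cast_natAbs, Int.cast_abs]
  nlinarith

lemma cubicTheta_exp_neg (x : ℝ) : cubicTheta (exp (-x)) = ∑' p, exp (-(x * cubicForm p)) := by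
  refine tsum_congr fun p => ?_
  rw [← rpow_intCast, ← exp_mul, cubicForm]
  push_cast
  ring_nf

theorem Summable.tsum_eq_add_tsum_subtype_ne {β E : Type*} [NormedAddCommGroup E] [CompleteSpace E]
    {f : β → E} (hf : Summable f) (b : β) :
    ∑' x, f x = f b + ∑' x : {x // x ≠ b}, f x := by
  rw [← Summable.tsum_add_tsum_compl (s := {b}) (hf.subtype _) (hf.subtype _), tsum_singleton]
  rfl

lemma cubicTheta_exp_neg_sub_one {x : ℝ} (hx : 0 < x) :
    cubicTheta (exp (-x)) - 1 = ∑' p : {p : ℤ × ℤ // p ≠ 0}, exp (-(x * cubicForm p)) := by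
  have hs := summable_exp_neg_mul_cubicForm hx
  rw [cubicTheta_exp_neg, hs.tsum_eq_add_tsum_subtype_ne 0]
  simp [cubicForm]

lemma integrableOn_exp_neg_div_Ioi {z : ℝ} (hz : 0 < z) :
    IntegrableOn (fun t => exp (-t) / t) (Ioi z) := by
  refine Integrable.mono' ((integrableOn_exp_neg_Ioi z).div_const z)
    (by fun_prop : Measurable fun t => exp (-t) / t).aestronglyMeasurable ?_
  filter_upwards [ae_restrict_mem measurableSet_Ioi] with t ht
  rw [norm_of_nonneg (div_nonneg (exp_pos _).le (hz.trans ht).le)]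
  gcongr
  exact ht.le

lemma incGamma_nonneg {z : ℝ} (hz : 0 ≤ z) : 0 ≤ incGamma z :=
  setIntegral_nonneg measurableSet_Ioi fun _ ht => div_nonneg (exp_pos _).le (hz.trans ht.le)

lemma incGamma_le_exp_neg_div {z : ℝ} (hz : 0 < z) : incGamma z ≤ exp (-z) / z := by
  calc incGamma z ≤ ∫ t in Ioi z, exp (-t) / z :=
        setIntegral_mono_on (integrableOn_exp_neg_div_Ioi hz)
          ((integrableOn_exp_neg_Ioi z).div_const z) measurableSet_Ioi
          fun _ ht => by gcongr; exact ht.le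
    _ = exp (-z) / z := by rw [integral_div, integral_exp_neg_Ioi]

lemma hasDerivAt_const_div {𝕜 : Type*} [NontriviallyNormedField 𝕜] (b : 𝕜) {s : 𝕜}
    (hs : s ≠ 0) :
    HasDerivAt (b / ·) (-(b / s ^ 2)) s := by
  simpa [div_eq_mul_inv] using (hasDerivAt_inv hs).const_mul b

lemma injective_const_div {G₀ : Type*} [CommGroupWithZero G₀] {b : G₀} (hb : b ≠ 0) :
    Function.Injective (b / ·) := fun s t h => by
  simpa [div_div_cancel₀ hb] using congrArg (b / ·) h

section ChangeOfVariables

variable {b c : ℝ}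

lemma image_const_div_Ioo_zero (hb : 0 < b) (hc : 0 < c) : (b / ·) '' Ioo 0 c = Ioi (b / c) := by
  have : (b / ·) = (b * ·) ∘ fun s : ℝ => s⁻¹ := by ext; simp [div_eq_mul_inv]
  rw [this, image_comp, image_inv_eq_inv, inv_Ioo_0_left hc, image_mul_left_Ioi hb,
    div_eq_mul_inv]

lemma integral_exp_neg_div_div_Ioo (hb : 0 < b) (hc : 0 < c) :
    ∫ s in Ioo 0 c, exp (-(b / s)) / s = incGamma (b / c) := by
  rw [incGamma, ← image_const_div_Ioo_zero hb hc, integral_image_eq_integral_abs_deriv_smul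
    measurableSet_Ioo (fun s hs => (hasDerivAt_const_div b hs.1.ne').hasDerivWithinAt)
    (injective_const_div hb.ne').injOn]
  refine setIntegral_congr_fun measurableSet_Ioo fun s hs => ?_
  have := hs.1
  rw [abs_neg, abs_of_pos (by positivity), smul_eq_mul]
  field_simp

lemma integrableOn_exp_neg_div_div_Ioo (hb : 0 < b) (hc : 0 < c) :
    IntegrableOn (fun s => exp (-(b / s)) / s) (Ioo 0 c) := by
  have h := (integrableOn_image_iff_integrableOn_abs_deriv_smul measurableSet_Ioo
    (fun s hs => (hasDerivAt_const_div b hs.1.ne').hasDerivWithinAt)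
    (injective_const_div hb.ne').injOn fun t => exp (-t) / t).1
    (by rw [image_const_div_Ioo_zero hb hc]; exact integrableOn_exp_neg_div_Ioi (by positivity))
  refine h.congr_fun (fun s hs => ?_) measurableSet_Ioo
  have := hs.1
  dsimp only
  rw [abs_neg, abs_of_pos (by positivity), smul_eq_mul]
  field_simp

end ChangeOfVariables

theorem integral_tsum_of_nonneg {α ι : Type*} [MeasurableSpace α] {μ : Measure α}
    [Countable ι] {f : ι → α → ℝ} (hf : ∀ i, Integrable (f i) μ)
    (hf₀ : ∀ i, 0 ≤ᵐ[μ] f i)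
    (hsum : Summable fun i => ∫ a, f i a ∂μ) :
    ∫ a, ∑' i, f i a ∂μ = ∑' i, ∫ a, f i a ∂μ :=
  (integral_tsum_of_summable_integral_norm hf <| hsum.congr fun i =>
    integral_congr_ae <| (hf₀ i).mono fun _ ha => (norm_of_nonneg ha).symm).symm

lemma summable_incGamma_mul_cubicForm {d : ℝ} (hd : 0 < d) :
    Summable fun p : {p : ℤ × ℤ // p ≠ 0} => incGamma (d * cubicForm p) := by
  have hQ (p : {p : ℤ × ℤ // p ≠ 0}) : (1 : ℝ) ≤ cubicForm p := by
    exact_mod_cast one_le_cubicForm p.2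
  refine .of_nonneg_of_le (fun p => incGamma_nonneg (by nlinarith [hQ p])) (fun p => ?_)
    (((summable_exp_neg_mul_cubicForm hd).subtype _).div_const d)
  calc incGamma (d * cubicForm p) ≤ exp (-(d * cubicForm p)) / (d * cubicForm p) :=
        incGamma_le_exp_neg_div (by nlinarith [hQ p])
    _ ≤ exp (-(d * cubicForm p)) / d := by gcongr; nlinarith [hQ p]

theorem integral_cubicTheta_eq_sum_incGamma (c : ℝ) (hc : 0 < c) :
    ∫ s in Set.Ioo (0 : ℝ) c,
        (1 / (2 * s)) * (cubicTheta (Real.exp (-2 * π / (Real.sqrt 3 * s))) - 1)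
      = (1 / 2) * ∑' p : { p : ℤ × ℤ // p ≠ 0 },
          incGamma ((2 * π / (Real.sqrt 3 * c))
            * ((p.1.1 : ℝ) ^ 2 + (p.1.1 : ℝ) * (p.1.2 : ℝ) + (p.1.2 : ℝ) ^ 2)) := by
  set a := 2 * π / √3 with ha_def
  have ha : 0 < a := by positivity
  have haQ : ∀ p : {p : ℤ × ℤ // p ≠ 0}, 0 < a * cubicForm p := fun p =>
    mul_pos ha (Int.cast_pos.2 (one_le_cubicForm p.2))
  have hpt : ∀ s ∈ Ioo 0 c,
      (1 / (2 * s)) * (cubicTheta (exp (-2 * π / (√3 * s))) - 1)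
        = (1 / 2) * ∑' p : {p : ℤ × ℤ // p ≠ 0}, exp (-(a * cubicForm p / s)) / s := by
    intro s hs
    have := hs.1
    rw [show -2 * π / (√3 * s) = -(a / s) by ring, cubicTheta_exp_neg_sub_one (by positivity),
      tsum_div_const]
    simp_rw [div_mul_eq_mul_div]
    ring
  have hterm : ∀ p : {p : ℤ × ℤ // p ≠ 0},
      ∫ s in Ioo 0 c, exp (-(a * cubicForm p / s)) / s = incGamma (a / c * cubicForm p) :=
    fun p => by rw [integral_exp_neg_div_div_Ioo (haQ p) hc, mul_div_right_comm]
  have hnonneg : ∀ p : {p : ℤ × ℤ // p ≠ 0},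
      0 ≤ᵐ[volume.restrict (Ioo 0 c)] fun s => exp (-(a * cubicForm p / s)) / s := fun p => by
    filter_upwards [ae_restrict_mem measurableSet_Ioo] with s hs
    exact div_nonneg (exp_pos _).le hs.1.le
  have hsum := summable_incGamma_mul_cubicForm (div_pos ha hc)
  simp_rw [← hterm] at hsum
  rw [setIntegral_congr_fun measurableSet_Ioo hpt, integral_const_mul, integral_tsum_of_nonneg
    (fun p => integrableOn_exp_neg_div_div_Ioo (haQ p) hc) hnonneg hsum]
  congr 1
  refine tsum_congr fun p => ?_
  rw [hterm, ha_def, cubicForm]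
  push_cast
  ring_nf
end

section
/- For all q sufficiently close to 1 from below (i.e., there exists q₀ ∈ (0,1) such that for all q ∈ (q₀, 1)), one has ∑_{m,n ∈ ℤ} q^{m²+mn+n²} ≥ 2π / (√3 · log(1/q)). -/
/-!
Splitting `ℤ²` by the parity of `n` turns `m² + mn + n²` into `k² + 3j²` or
`(k + ½)² + 3(j + ½)²`, so with `q = e^{-πx}` the cubic theta function is
`θ₀(x) θ₀(3x) + θ_½(x) θ_½(3x)`, a sum of products of Hurwitz even kernels.
Poisson summation (the functional equation of these kernels) rewrites it as
`(√3 x)⁻¹ (A B + A' B')`, where `A, B` are cosine kernels at `0` and `A', B'` at `½`.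
Termwise, `A' ≤ A` and `A + A' ≥ 2` (the `n = 0` term), likewise for `B`, which forces
`A B + A' B' ≥ 2`.
-/

open Real

open HurwitzZeta

/-- `(k, j) ↦ (k - j, 2j)` and `(k, j) ↦ (k - j, 2j + 1)`: the quadratic form pulls back to
`k² + 3j²` and `(k + ½)² + 3(j + ½)²` respectively. -/
def cubicLatticeEquiv : (ℤ × ℤ) ⊕ (ℤ × ℤ) ≃ ℤ × ℤ where
  toFun
    | .inl (k, j) => (k - j, 2 * j)
    | .inr (k, j) => (k - j, 2 * j + 1)
  invFun p := if p.2 % 2 = 0 then .inl (p.1 + p.2 / 2, p.2 / 2) else .inr (p.1 + p.2 / 2, p.2 / 2)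
  left_inv := by rintro (⟨k, j⟩ | ⟨k, j⟩) <;> grind
  right_inv := by rintro ⟨m, n⟩; grind

lemma hasSum_evenKernel_mul_evenKernel (a : ℝ) {x y : ℝ} (hx : 0 < x) (hy : 0 < y) :
    HasSum (fun p : ℤ × ℤ => rexp (-π * ((p.1 + a) ^ 2 * x + (p.2 + a) ^ 2 * y)))
      (evenKernel a x * evenKernel a y) := by
  have hx' := hasSum_int_evenKernel a hx
  have hy' := hasSum_int_evenKernel a hy
  have hnorm {t : ℝ} (ht : 0 < t) :
      Summable fun n : ℤ => ‖rexp (-π * (n + a) ^ 2 * t)‖ := by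
    simpa only [Real.norm_eq_abs, Real.abs_exp] using (hasSum_int_evenKernel a ht).summable
  refine (hx'.mul hy' (summable_mul_of_summable_norm (hnorm hx) (hnorm hy))).congr_fun
    fun p => ?_
  rw [← Real.exp_add]
  ring_nf

lemma hasSum_cubicTheta_exp_neg_pi_mul {x : ℝ} (hx : 0 < x) :
    HasSum (fun p : ℤ × ℤ => rexp (-π * x) ^ (p.1 ^ 2 + p.1 * p.2 + p.2 ^ 2))
      (evenKernel 0 x * evenKernel 0 (3 * x)
        + evenKernel (1 / 2 : ℝ) x * evenKernel (1 / 2 : ℝ) (3 * x)) := by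
  have h3x : 0 < 3 * x := by positivity
  rw [← cubicLatticeEquiv.hasSum_iff]
  refine .sum ?_ ?_
  · convert hasSum_evenKernel_mul_evenKernel 0 hx h3x using 1
    · ext ⟨k, j⟩
      simp only [Function.comp_apply, cubicLatticeEquiv, Equiv.coe_fn_mk, ← rpow_intCast,
        ← exp_mul]
      push_cast
      ring_nf
    · simp only [QuotientAddGroup.mk_zero]
  · convert hasSum_evenKernel_mul_evenKernel (1 / 2) hx h3x using 1
    ext ⟨k, j⟩
    simp only [Function.comp_apply, cubicLatticeEquiv, Equiv.coe_fn_mk, ← rpow_intCast,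
      ← exp_mul]
    push_cast
    ring_nf

lemma hasSum_int_cos_mul_cosKernel (a : ℝ) {t : ℝ} (ht : 0 < t) :
    HasSum (fun n : ℤ => Real.cos (2 * π * a * n) * rexp (-π * n ^ 2 * t)) (cosKernel a t) := by
  refine (Complex.hasSum_re (hasSum_int_cosKernel a ht)).congr_fun fun n => ?_
  rw [Complex.re_mul_ofReal, ← Complex.exp_ofReal_mul_I_re]
  push_cast
  ring_nf

lemma hasSum_int_cosKernel_zero {t : ℝ} (ht : 0 < t) :
    HasSum (fun n : ℤ => rexp (-π * n ^ 2 * t)) (cosKernel 0 t) := by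
  simpa only [mul_zero, zero_mul, Real.cos_zero, one_mul, QuotientAddGroup.mk_zero]
    using hasSum_int_cos_mul_cosKernel 0 ht

lemma cosKernel_le_cosKernel_zero (a : ℝ) {t : ℝ} (ht : 0 < t) :
    cosKernel a t ≤ cosKernel 0 t :=
  hasSum_le (fun _ => mul_le_of_le_one_left (Real.exp_pos _).le (Real.cos_le_one _))
    (hasSum_int_cos_mul_cosKernel a ht) (hasSum_int_cosKernel_zero ht)

lemma two_le_cosKernel_zero_add (a : ℝ) {t : ℝ} (ht : 0 < t) :
    2 ≤ cosKernel 0 t + cosKernel a t := by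
  have h := (hasSum_int_cosKernel_zero ht).add (hasSum_int_cos_mul_cosKernel a ht)
  calc (2 : ℝ) = rexp (-π * (0 : ℤ) ^ 2 * t)
        + Real.cos (2 * π * a * (0 : ℤ)) * rexp (-π * (0 : ℤ) ^ 2 * t) := by norm_num
    _ ≤ _ := le_hasSum h 0 fun n _ => by
        nlinarith [Real.neg_one_le_cos (2 * π * a * n), Real.exp_pos (-π * n ^ 2 * t)]

lemma cubicTheta_exp_neg_pi_mul {x : ℝ} (hx : 0 < x) :
    cubicTheta (rexp (-π * x)) = 1 / (√3 * x) *
      (cosKernel 0 (1 / x) * cosKernel 0 (1 / (3 * x))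
        + cosKernel (1 / 2 : ℝ) (1 / x) * cosKernel (1 / 2 : ℝ) (1 / (3 * x))) := by
  have hroot : x ^ (1 / 2 : ℝ) * (3 * x) ^ (1 / 2 : ℝ) = √3 * x := by
    rw [← Real.sqrt_eq_rpow, ← Real.sqrt_eq_rpow, Real.sqrt_mul (by norm_num),
      mul_left_comm, Real.mul_self_sqrt hx.le]
  rw [cubicTheta, (hasSum_cubicTheta_exp_neg_pi_mul hx).tsum_eq]
  simp only [evenKernel_functional_equation, ← hroot]
  field_simp

lemma two_div_sqrt_three_mul_le_cubicTheta {x : ℝ} (hx : 0 < x) :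
    2 / (√3 * x) ≤ cubicTheta (rexp (-π * x)) := by
  have h3x : 0 < 1 / (3 * x) := by positivity
  have hA := two_le_cosKernel_zero_add (1 / 2) (one_div_pos.2 hx)
  have hB := two_le_cosKernel_zero_add (1 / 2) h3x
  have hA' := cosKernel_le_cosKernel_zero (1 / 2) (one_div_pos.2 hx)
  have hB' := cosKernel_le_cosKernel_zero (1 / 2) h3x
  rw [cubicTheta_exp_neg_pi_mul hx, div_eq_mul_one_div, mul_comm]
  gcongr
  -- `2 (A B + A' B') = (A + A') (B + B') + (A - A') (B - B')`
  nlinarith [mul_nonneg (sub_nonneg.2 hA') (sub_nonneg.2 hB')]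

lemma two_mul_pi_div_le_cubicTheta {q : ℝ} (hq₀ : 0 < q) (hq₁ : q < 1) :
    2 * π / (√3 * Real.log (1 / q)) ≤ cubicTheta q := by
  have hx : 0 < Real.log (1 / q) / π :=
    div_pos (Real.log_pos (one_lt_one_div hq₀ hq₁)) pi_pos
  have hexp : rexp (-π * (Real.log (1 / q) / π)) = q := by
    rw [neg_mul, mul_div_cancel₀ _ pi_ne_zero, one_div, Real.log_inv, neg_neg, Real.exp_log hq₀]
  calc 2 * π / (√3 * Real.log (1 / q)) = 2 / (√3 * (Real.log (1 / q) / π)) := by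
        field_simp
    _ ≤ cubicTheta (rexp (-π * (Real.log (1 / q) / π))) :=
        two_div_sqrt_three_mul_le_cubicTheta hx
    _ = cubicTheta q := by rw [hexp]

theorem cubicTheta_ge_near_one :
    ∃ q₀ ∈ Set.Ioo (0 : ℝ) 1, ∀ q ∈ Set.Ioo q₀ 1,
      2 * π / (Real.sqrt 3 * Real.log (1 / q)) ≤ cubicTheta q :=
  ⟨1 / 2, ⟨by norm_num, by norm_num⟩, fun _ ⟨hq₀, hq₁⟩ =>
    two_mul_pi_div_le_cubicTheta (by linarith) hq₁⟩
end

section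
/- For all sufficiently large c > 0, L( exp(−2π/(√3·c)) ) ≥ c, where L(q) = ∑_{m,n ∈ ℤ} q^{m²+mn+n²}. -/
open Real

/-!
Write `q = e^{-t}` and `θ(s) = ∑ₙ e^{-s n²}`. Completing the square,
`m² + mn + n² = (3/4) m² + (n + m/2)²`, and splitting by the parity of `m` gives
`L(e^{-t}) = θ(3t) θ(t) + (θ(3t/4) - θ(3t)) (θ(t/4) - θ(t))`, where
`θ(s/4) - θ(s) = ∑ₙ e^{-s(n + 1/2)²}`. Jacobi's transformation `θ(s) = √(π/s) θ(π²/s)` turns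
this into `π/(√3 t) · (θ(σ) θ(3σ) + θ⁻(σ) θ⁻(3σ))` with `σ = π²/(3t)` and `θ⁻` the alternating
theta sum. For `t = 2π/(√3 c)` the prefactor is `c/2`, and once `σ ≥ 1` the bracket is at least
`2`, because `θ ≥ 1` and `2 - θ ≤ θ⁻ ≤ 1` there.
-/

theorem HasSum.int_even_add_odd {M : Type*} [AddCommMonoid M] [TopologicalSpace M]
    [ContinuousAdd M] {f : ℤ → M} {a b : M} (he : HasSum (fun k ↦ f (2 * k)) a)
    (ho : HasSum (fun k ↦ f (2 * k + 1)) b) : HasSum f (a + b) := by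
  have := mul_right_injective₀ (two_ne_zero' ℤ)
  replace ho := ((add_left_injective 1).comp this).hasSum_range_iff.2 ho
  refine (this.hasSum_range_iff.2 he).add_isCompl ?_ ho
  simpa [Function.comp_def] using Int.isCompl_even_odd

theorem tsum_int_eq_tsum_even_add_tsum_odd {G : Type*} [AddCommGroup G] [UniformSpace G]
    [IsUniformAddGroup G] [CompleteSpace G] [T2Space G] {f : ℤ → G} (hf : Summable f) :
    ∑' k, f k = ∑' k, f (2 * k) + ∑' k, f (2 * k + 1) :=
  ((hf.comp_injective fun _ _ h ↦ by omega).hasSum.int_even_add_odd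
    (hf.comp_injective fun _ _ h ↦ by omega).hasSum).tsum_eq

namespace CubicTheta

noncomputable def thetaSum (s : ℝ) : ℝ := ∑' n : ℤ, exp (-s * n ^ 2)

/-- The alternating sum `∑ (-1)ⁿ e^{-s n²}`: even terms minus odd terms. -/
noncomputable def altThetaSum (s : ℝ) : ℝ := 2 * thetaSum (4 * s) - thetaSum s

noncomputable def shiftedThetaSum (s x : ℝ) : ℝ := ∑' n : ℤ, exp (-s * (n + x) ^ 2)

section ThetaSum

variable {s : ℝ}

theorem summable_exp_neg_mul_int_sq (hs : 0 < s) :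
    Summable fun n : ℤ ↦ exp (-s * n ^ 2) := by
  have hnat : Summable fun n : ℕ ↦ exp (-s * n ^ 2) := by
    refine (summable_geometric_of_lt_one (exp_pos (-s)).le
      (exp_lt_one_iff.mpr (by linarith))).of_nonneg_of_le (fun n ↦ (exp_pos _).le) fun n ↦ ?_
    rw [← exp_nat_mul, exp_le_exp]
    have : (n : ℝ) ≤ n ^ 2 := by exact_mod_cast Nat.le_self_pow two_ne_zero n
    nlinarith
  exact .of_nat_of_neg (by simpa using hnat) (by simpa using hnat)

theorem one_le_thetaSum (hs : 0 < s) : 1 ≤ thetaSum s := by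
  have := (summable_exp_neg_mul_int_sq hs).le_tsum 0 fun n _ ↦ (exp_pos _).le
  simpa [thetaSum] using this

theorem thetaSum_eq_sqrt_mul_thetaSum (hs : 0 < s) :
    thetaSum s = √(π / s) * thetaSum (π ^ 2 / s) := by
  have h := tsum_exp_neg_mul_int_sq (a := s / π) (by positivity)
  rw [one_div, ← sqrt_eq_rpow, ← sqrt_inv, inv_div] at h
  have e1 (n : ℤ) : -π * (s / π) * (n : ℝ) ^ 2 = -s * n ^ 2 := by field_simp
  have e2 (n : ℤ) : -π / (s / π) * (n : ℝ) ^ 2 = -(π ^ 2 / s) * n ^ 2 := by field_simp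
  simp only [e1, e2] at h
  exact h

theorem thetaSum_div_four_sub_thetaSum (hs : 0 < s) :
    thetaSum (s / 4) - thetaSum s = √(π / s) * altThetaSum (π ^ 2 / s) := by
  have h := thetaSum_eq_sqrt_mul_thetaSum (s := s / 4) (by positivity)
  rw [show π / (s / 4) = 2 ^ 2 * (π / s) by ring, show π ^ 2 / (s / 4) = 4 * (π ^ 2 / s) by ring,
    sqrt_mul (by positivity), sqrt_sq zero_le_two] at h
  rw [h, thetaSum_eq_sqrt_mul_thetaSum hs, altThetaSum]
  ring

theorem two_sub_thetaSum_le_altThetaSum (hs : 0 < s) : 2 - thetaSum s ≤ altThetaSum s := by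
  rw [altThetaSum]
  linarith [one_le_thetaSum (show 0 < 4 * s by positivity)]

/-- For `s ≥ 1` and `n ≠ 0`, `2 e^{-4sn²} ≤ e^{-sn²}`, so `2 θ(4s) ≤ θ(s) + 1`. -/
theorem altThetaSum_le_one (hs : 1 ≤ s) : altThetaSum s ≤ 1 := by
  have hs0 : 0 < s := by linarith
  have hind : HasSum (fun n : ℤ ↦ if n = 0 then (1 : ℝ) else 0) 1 := hasSum_ite_eq 0 1
  have hle (n : ℤ) : 2 * exp (-(4 * s) * n ^ 2) ≤ exp (-s * n ^ 2) + if n = 0 then 1 else 0 := by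
    rcases eq_or_ne n 0 with rfl | hn
    · norm_num
    have hn1 : (1 : ℝ) ≤ n ^ 2 :=
      (one_le_sq_iff_one_le_abs _).mpr (by exact_mod_cast Int.one_le_abs hn)
    have h2 : 2 ≤ exp (3 * s * n ^ 2) := by
      linarith [add_one_le_exp (3 * s * n ^ 2),
        le_mul_of_one_le_right (show (0 : ℝ) ≤ 3 * s by linarith) hn1]
    calc 2 * exp (-(4 * s) * n ^ 2) = 2 * exp (-s * n ^ 2) / exp (3 * s * n ^ 2) := by
          rw [mul_div_assoc, ← exp_sub]; ring_nf
      _ ≤ exp (-s * n ^ 2) :=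
          div_le_of_le_mul₀ (exp_pos _).le (by positivity) (by nlinarith [exp_pos (-s * n ^ 2)])
      _ = _ := by simp [hn]
  have := hasSum_le hle ((summable_exp_neg_mul_int_sq (by positivity)).hasSum.mul_left 2)
    ((summable_exp_neg_mul_int_sq hs0).hasSum.add hind)
  rw [altThetaSum, thetaSum, thetaSum]
  linarith

theorem tsum_exp_neg_mul_odd_sq (hs : 0 < s) :
    ∑' n : ℤ, exp (-s * (2 * n + 1) ^ 2) = thetaSum s - thetaSum (4 * s) := by
  rw [thetaSum, tsum_int_eq_tsum_even_add_tsum_odd (summable_exp_neg_mul_int_sq hs), thetaSum]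
  push_cast
  ring_nf

theorem shiftedThetaSum_add_intCast (s x : ℝ) (k : ℤ) :
    shiftedThetaSum s (x + k) = shiftedThetaSum s x := by
  rw [shiftedThetaSum, shiftedThetaSum,
    ← (Equiv.addRight k).tsum_eq fun n : ℤ ↦ exp (-s * (n + x) ^ 2)]
  refine tsum_congr fun n ↦ ?_
  simp only [Equiv.coe_addRight, Int.cast_add]
  ring_nf

theorem shiftedThetaSum_zero (s : ℝ) : shiftedThetaSum s 0 = thetaSum s := by
  simp [shiftedThetaSum, thetaSum]

theorem shiftedThetaSum_half (hs : 0 < s) :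
    shiftedThetaSum s (1 / 2) = thetaSum (s / 4) - thetaSum s := by
  have h := tsum_exp_neg_mul_odd_sq (s := s / 4) (by positivity)
  rw [show 4 * (s / 4) = s by ring] at h
  rw [← h]
  exact tsum_congr fun n ↦ by ring_nf

theorem two_le_thetaSum_mul_add_altThetaSum_mul {σ τ : ℝ} (hσ : 1 ≤ σ) (hτ : 1 ≤ τ) :
    2 ≤ thetaSum σ * thetaSum τ + altThetaSum σ * altThetaSum τ := by
  have hσ₁ := one_le_thetaSum (s := σ) (by linarith)
  have hτ₁ := one_le_thetaSum (s := τ) (by linarith)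
  have hσ₂ := sub_nonneg.2 (two_sub_thetaSum_le_altThetaSum (s := σ) (by linarith))
  have hτ₂ := sub_nonneg.2 (two_sub_thetaSum_le_altThetaSum (s := τ) (by linarith))
  have hσ₃ := sub_nonneg.2 (altThetaSum_le_one hσ)
  have hτ₃ := sub_nonneg.2 (altThetaSum_le_one hτ)
  -- the product of the alternating sums is bilinear on a box; these are its corner bounds
  nlinarith [mul_nonneg hσ₂ hτ₂, mul_nonneg hσ₂ hτ₃, mul_nonneg hσ₃ hτ₂, mul_nonneg hσ₃ hτ₃]

end ThetaSum

section CubicForm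

variable {t : ℝ}

theorem cubicTheta_exp_neg (t : ℝ) :
    cubicTheta (exp (-t)) = ∑' p : ℤ × ℤ, exp (-t * ((p.1 : ℝ) ^ 2 + p.1 * p.2 + p.2 ^ 2)) := by
  refine tsum_congr fun p ↦ ?_
  rw [← rpow_intCast, ← exp_mul]
  push_cast
  ring_nf

theorem summable_exp_neg_mul_cubicForm (ht : 0 < t) :
    Summable fun p : ℤ × ℤ ↦ exp (-t * ((p.1 : ℝ) ^ 2 + p.1 * p.2 + p.2 ^ 2)) := by
  have h := summable_exp_neg_mul_int_sq (s := t / 2) (by positivity)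
  refine (h.mul_of_nonneg h (fun _ ↦ (exp_pos _).le) fun _ ↦ (exp_pos _).le).of_nonneg_of_le
    (fun _ ↦ (exp_pos _).le) fun p ↦ ?_
  rw [← exp_add, exp_le_exp]
  nlinarith [sq_nonneg ((p.1 : ℝ) + p.2)]

theorem tsum_exp_neg_mul_cubicForm_right (t : ℝ) (m : ℤ) :
    ∑' n : ℤ, exp (-t * ((m : ℝ) ^ 2 + m * n + n ^ 2)) =
      exp (-(3 * t / 4) * m ^ 2) * shiftedThetaSum t (m / 2) := by
  rw [shiftedThetaSum, ← tsum_mul_left]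
  refine tsum_congr fun n ↦ ?_
  rw [← exp_add]
  ring_nf

theorem cubicTheta_exp_neg_eq (ht : 0 < t) :
    cubicTheta (exp (-t)) = thetaSum (3 * t) * thetaSum t +
      (thetaSum (3 * t / 4) - thetaSum (3 * t)) * (thetaSum (t / 4) - thetaSum t) := by
  have hsum := summable_exp_neg_mul_cubicForm ht
  have hrows := hsum.prod
  simp only [tsum_exp_neg_mul_cubicForm_right] at hrows
  have heven (k : ℤ) : exp (-(3 * t / 4) * ((2 * k : ℤ) : ℝ) ^ 2) *
      shiftedThetaSum t ((2 * k : ℤ) / 2) = exp (-(3 * t) * k ^ 2) * thetaSum t := by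
    rw [show ((2 * k : ℤ) : ℝ) / 2 = 0 + k by push_cast; ring, shiftedThetaSum_add_intCast,
      shiftedThetaSum_zero]
    push_cast
    ring_nf
  have hodd (k : ℤ) : exp (-(3 * t / 4) * ((2 * k + 1 : ℤ) : ℝ) ^ 2) *
      shiftedThetaSum t ((2 * k + 1 : ℤ) / 2) =
        exp (-(3 * t / 4) * (2 * k + 1) ^ 2) * (thetaSum (t / 4) - thetaSum t) := by
    rw [show ((2 * k + 1 : ℤ) : ℝ) / 2 = 1 / 2 + k by push_cast; ring,
      shiftedThetaSum_add_intCast, shiftedThetaSum_half ht]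
    push_cast
    ring_nf
  rw [cubicTheta_exp_neg, hsum.tsum_prod, tsum_congr (tsum_exp_neg_mul_cubicForm_right t),
    tsum_int_eq_tsum_even_add_tsum_odd hrows, tsum_congr heven, tsum_congr hodd, tsum_mul_right,
    tsum_mul_right, tsum_exp_neg_mul_odd_sq (by positivity), show 4 * (3 * t / 4) = 3 * t by ring]
  rfl

theorem cubicTheta_exp_neg_eq_dual (ht : 0 < t) :
    cubicTheta (exp (-t)) = π / (√3 * t) *
      (thetaSum (π ^ 2 / (3 * t)) * thetaSum (3 * (π ^ 2 / (3 * t))) +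
        altThetaSum (π ^ 2 / (3 * t)) * altThetaSum (3 * (π ^ 2 / (3 * t)))) := by
  have h3t : 0 < 3 * t := by positivity
  have hprefactor : √(π / (3 * t)) * √(π / t) = π / (√3 * t) := by
    rw [← sqrt_mul (by positivity), show π / (3 * t) * (π / t) = (π / t) ^ 2 / 3 by ring,
      sqrt_div' _ zero_le_three, sqrt_sq (by positivity)]
    field_simp
  rw [cubicTheta_exp_neg_eq ht, thetaSum_div_four_sub_thetaSum h3t,
    thetaSum_div_four_sub_thetaSum ht, thetaSum_eq_sqrt_mul_thetaSum h3t,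
    thetaSum_eq_sqrt_mul_thetaSum ht,
    show π ^ 2 / t = 3 * (π ^ 2 / (3 * t)) by field_simp, ← hprefactor]
  ring

end CubicForm

end CubicTheta

open CubicTheta in
theorem cubicTheta_ge_self_eventually :
    ∃ c₀ : ℝ, 0 < c₀ ∧ ∀ c ≥ c₀,
      c ≤ cubicTheta (Real.exp (-2 * π / (Real.sqrt 3 * c))) := by
  refine ⟨2, two_pos, fun c hc ↦ ?_⟩
  have hc0 : 0 < c := by linarith
  set t := 2 * π / (√3 * c) with ht_def
  have ht : 0 < t := by positivity
  have hprefactor : π / (√3 * t) = c / 2 := by rw [ht_def]; field_simp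
  have hσ : 1 ≤ π ^ 2 / (3 * t) := by
    have h3 : (1 : ℝ) ≤ √3 := one_le_sqrt.mpr (by norm_num)
    rw [show π ^ 2 / (3 * t) = π * √3 * c / 6 by rw [ht_def]; field_simp; norm_num,
      le_div_iff₀ (by norm_num)]
    nlinarith [pi_gt_three, mul_le_mul h3 hc zero_le_two (by positivity)]
  have hbracket := two_le_thetaSum_mul_add_altThetaSum_mul hσ (τ := 3 * (π ^ 2 / (3 * t)))
    (by linarith)
  rw [show -2 * π / (√3 * c) = -t by ring, cubicTheta_exp_neg_eq_dual ht, hprefactor]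
  nlinarith
end
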